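/- arXiv:math/0008138 — 3 statements merged into one kernel-verified Lean document; each statement's English description precedes it below -/
import Mathlib

section
/- Let E be a real normed vector space, let δ > 0, and let w : ℝ → ℝ be a δ-Kobayashi cutoff, i.e. w is infinitely differentiable, 0 ≤ w(t) ≤ 1 for all t, w(t) = 0 for all t ≥ δ, and |t·(deriv w)(t)| ≤ δ and |t·(deriv (deriv w))(t)| ≤ δ for all t ≥ 0. Let C ≥ 0 and let h : ℝ → E be differentiable with ‖h(t)‖ ≤ C·t² and ‖(deriv h)(t)‖ ≤ C·t for all t ≥ 0. Then for every t ≥ 0, ‖deriv (fun s => w(s) • h(s)) (t)‖ ≤ C·δ² + C·δ. In particular, w·h converges to 0 in C¹-norm on [0, ∞) as δ → 0. -/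
/-- C¹-estimate for a δ-Kobayashi cutoff: if `w` is a δ-Kobayashi cutoff and `h` is
differentiable with `‖h t‖ ≤ C * t ^ 2` and `‖deriv h t‖ ≤ C * t` for `t ≥ 0`, then
`‖deriv (fun s => w s • h s) t‖ ≤ C * δ ^ 2 + C * δ` for `t ≥ 0`. -/
theorem kobayashi_cutoff_C1_estimate
    {E : Type*} [NormedAddCommGroup E] [NormedSpace ℝ E]
    (δ : ℝ) (hδ : 0 < δ) (w : ℝ → ℝ)
    (hw_smooth : ContDiff ℝ (⊤ : ℕ∞) w)
    (hw_nonneg : ∀ t : ℝ, 0 ≤ w t) (hw_le_one : ∀ t : ℝ, w t ≤ 1)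
    (hw_zero : ∀ t : ℝ, δ ≤ t → w t = 0)
    (hw_deriv : ∀ t : ℝ, 0 ≤ t → |t * deriv w t| ≤ δ)
    (hw_deriv2 : ∀ t : ℝ, 0 ≤ t → |t * deriv (deriv w) t| ≤ δ)
    (C : ℝ) (hC : 0 ≤ C) (h : ℝ → E)
    (hh_diff : Differentiable ℝ h)
    (hh : ∀ t : ℝ, 0 ≤ t → ‖h t‖ ≤ C * t ^ 2)
    (hh' : ∀ t : ℝ, 0 ≤ t → ‖deriv h t‖ ≤ C * t)
    (t : ℝ) (ht : 0 ≤ t) :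
    ‖deriv (fun s => w s • h s) t‖ ≤ C * δ ^ 2 + C * δ := by

  have hwd : Differentiable ℝ w := hw_smooth.differentiable (by simp)
  have hder : deriv (fun s => w s • h s) t = deriv w t • h t + w t • deriv h t := by
    rw [deriv_fun_smul (hwd t) (hh_diff t)]; abel
  rw [hder]
  rcases le_or_gt t δ with htδ | htδ
  · have h1 : ‖deriv w t • h t‖ ≤ C * δ ^ 2 := by
      rw [norm_smul, Real.norm_eq_abs]
      have := hw_deriv t ht
      calc |deriv w t| * ‖h t‖ ≤ |deriv w t| * (C * t ^ 2) := by
            exact mul_le_mul_of_nonneg_left (hh t ht) (abs_nonneg _)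
        _ = C * (t * (|t * deriv w t|)) := by
            rw [abs_mul, abs_of_nonneg ht]; ring
        _ ≤ C * (δ * δ) := by
            apply mul_le_mul_of_nonneg_left _ hC
            exact mul_le_mul htδ this (abs_nonneg _) hδ.le
        _ = C * δ ^ 2 := by ring
    have h2 : ‖w t • deriv h t‖ ≤ C * δ := by
      rw [norm_smul, Real.norm_eq_abs, abs_of_nonneg (hw_nonneg t)]
      calc w t * ‖deriv h t‖ ≤ 1 * (C * t) :=
            mul_le_mul (hw_le_one t) (hh' t ht) (norm_nonneg _) zero_le_one
        _ = C * t := one_mul _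
        _ ≤ C * δ := mul_le_mul_of_nonneg_left htδ hC
    calc ‖deriv w t • h t + w t • deriv h t‖ ≤ ‖deriv w t • h t‖ + ‖w t • deriv h t‖ :=
          norm_add_le _ _
      _ ≤ C * δ ^ 2 + C * δ := add_le_add h1 h2
  · have hev : w =ᶠ[nhds t] (fun _ => 0) := by
      filter_upwards [Ioi_mem_nhds htδ] with s hs
      exact hw_zero s (le_of_lt hs)
    have hw0 : deriv w t = 0 := by
      rw [hev.deriv_eq, deriv_const]
    have hwt0 : w t = 0 := hw_zero t htδ.le
    rw [hw0, hwt0, zero_smul, zero_smul, add_zero, norm_zero]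
    positivity
end

section
/- Let E be a real normed vector space, let δ > 0, and let w : ℝ → ℝ be a δ-Kobayashi cutoff, i.e. w is infinitely differentiable, 0 ≤ w(t) ≤ 1 for all t, w(t) = 0 for all t ≥ δ, and |t·(deriv w)(t)| ≤ δ and |t·(deriv (deriv w))(t)| ≤ δ for all t ≥ 0. Let C ≥ 0 and let h : ℝ → E be twice differentiable with ‖h(t)‖ ≤ C·t² and ‖(deriv h)(t)‖ ≤ C·t for all t ≥ 0. Then for every t ≥ 0, ‖deriv (deriv (fun s => w(s) • h(s))) (t) − w(t) • (deriv (deriv h))(t)‖ ≤ C·δ² + 2·C·δ. -/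
/-- Second-order commutator estimate for a δ-Kobayashi cutoff: if `w` is a δ-Kobayashi
cutoff and `h` is twice differentiable with `‖h t‖ ≤ C * t ^ 2` and `‖deriv h t‖ ≤ C * t`
for `t ≥ 0`, then `‖deriv (deriv (fun s => w s • h s)) t - w t • deriv (deriv h) t‖ ≤
C * δ ^ 2 + 2 * C * δ` for `t ≥ 0`. -/
theorem kobayashi_cutoff_C2_commutator_estimate
    {E : Type*} [NormedAddCommGroup E] [NormedSpace ℝ E]
    (δ : ℝ) (hδ : 0 < δ) (w : ℝ → ℝ)
    (hw_smooth : ContDiff ℝ (⊤ : ℕ∞) w)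
    (hw_nonneg : ∀ t : ℝ, 0 ≤ w t) (hw_le_one : ∀ t : ℝ, w t ≤ 1)
    (hw_zero : ∀ t : ℝ, δ ≤ t → w t = 0)
    (hw_deriv : ∀ t : ℝ, 0 ≤ t → |t * deriv w t| ≤ δ)
    (hw_deriv2 : ∀ t : ℝ, 0 ≤ t → |t * deriv (deriv w) t| ≤ δ)
    (C : ℝ) (hC : 0 ≤ C) (h : ℝ → E)
    (hh_diff : Differentiable ℝ h)
    (hh_diff2 : Differentiable ℝ (deriv h))
    (hh : ∀ t : ℝ, 0 ≤ t → ‖h t‖ ≤ C * t ^ 2)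
    (hh' : ∀ t : ℝ, 0 ≤ t → ‖deriv h t‖ ≤ C * t)
    (t : ℝ) (ht : 0 ≤ t) :
    ‖deriv (deriv (fun s => w s • h s)) t - w t • deriv (deriv h) t‖ ≤
      C * δ ^ 2 + 2 * C * δ := by
  have hw_inf : ContDiff ℝ ((⊤ : ℕ∞) : WithTop ℕ∞) w := hw_smooth.of_le (by simp)
  have hw_d : Differentiable ℝ w := hw_inf.differentiable (by norm_num)
  have hw_d' : Differentiable ℝ (deriv w) :=
    ((contDiff_infty_iff_deriv.1 hw_inf).2).differentiable (by norm_num)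
  -- first derivative formula
  have key : deriv (fun u => w u • h u) = fun s => w s • deriv h s + deriv w s • h s := by
    funext s
    exact ((hw_d s).hasDerivAt.smul (hh_diff s).hasDerivAt).deriv
  -- second derivative formula
  have key2 : deriv (deriv (fun u => w u • h u)) t =
      (w t • deriv (deriv h) t + deriv w t • deriv h t) +
        (deriv w t • deriv h t + deriv (deriv w) t • h t) := by
    rw [key]
    exact (((hw_d t).hasDerivAt.smul (hh_diff2 t).hasDerivAt).add
      ((hw_d' t).hasDerivAt.smul (hh_diff t).hasDerivAt)).deriv
  have hdiff : deriv (deriv (fun s => w s • h s)) t - w t • deriv (deriv h) t =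
      deriv (deriv w) t • h t + (2 * deriv w t) • deriv h t := by
    rw [key2]; module
  rw [hdiff]
  have hterm2 : ‖(2 * deriv w t) • deriv h t‖ ≤ 2 * C * δ := by
    rw [norm_smul]
    calc ‖(2 : ℝ) * deriv w t‖ * ‖deriv h t‖
        ≤ (2 * |deriv w t|) * (C * t) := by
          apply mul_le_mul _ (hh' t ht) (norm_nonneg _) (by positivity)
          rw [Real.norm_eq_abs, abs_mul]
          simp
      _ = 2 * C * |t * deriv w t| := by
          rw [abs_mul, abs_of_nonneg ht]; ring
      _ ≤ 2 * C * δ := by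
          have := hw_deriv t ht
          nlinarith
  have hterm1 : ‖deriv (deriv w) t • h t‖ ≤ C * δ ^ 2 := by
    rcases le_or_gt t δ with htδ | htδ
    · rw [norm_smul]
      calc ‖deriv (deriv w) t‖ * ‖h t‖
          ≤ |deriv (deriv w) t| * (C * t ^ 2) := by
            apply mul_le_mul_of_nonneg_left (hh t ht) (abs_nonneg _)
        _ = (C * t) * |t * deriv (deriv w) t| := by
            rw [abs_mul, abs_of_nonneg ht]; ring
        _ ≤ (C * δ) * δ :=
            mul_le_mul (mul_le_mul_of_nonneg_left htδ hC) (hw_deriv2 t ht)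
              (abs_nonneg _) (by positivity)
        _ = C * δ ^ 2 := by ring
    · -- t > δ : all derivatives of w vanish at t
      have hev : w =ᶠ[nhds t] (fun _ => (0 : ℝ)) := by
        filter_upwards [Ioi_mem_nhds htδ] with x hx using hw_zero x hx.le
      have h2 : deriv (deriv w) t = 0 := by
        have := (hev.deriv.deriv).eq_of_nhds
        simpa using this
      rw [h2]
      simp
      positivity
  calc ‖deriv (deriv w) t • h t + (2 * deriv w t) • deriv h t‖
      ≤ ‖deriv (deriv w) t • h t‖ + ‖(2 * deriv w t) • deriv h t‖ := norm_add_le _ _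
    _ ≤ C * δ ^ 2 + 2 * C * δ := add_le_add hterm1 hterm2
end

section
/- Let E be a real normed vector space, let δ > 0, let ε ∈ (0, δ), and let w : ℝ → ℝ be a δ-Kobayashi cutoff which in addition satisfies w(t) = 1 for all t ∈ [0, ε]; that is, w is infinitely differentiable, 0 ≤ w(t) ≤ 1 for all t, w(t) = 1 for t ∈ [0, ε], w(t) = 0 for t ≥ δ, and |t·(deriv w)(t)| ≤ δ and |t·(deriv (deriv w))(t)| ≤ δ for all t ≥ 0. Let C ≥ 0, let g : ℝ → E be any function, and let h : ℝ → E be differentiable with ‖h(t)‖ ≤ C·t² and ‖(deriv h)(t)‖ ≤ C·t for all t ≥ 0. Define g_δ : ℝ → E by g_δ(t) = g(t) + w(t) • h(t). Then: (i) g_δ(t) = g(t) + h(t) for all t ∈ [0, ε]; (ii) g_δ(t) = g(t) for all t ≥ δ; (iii) ‖g_δ(t) − g(t)‖ ≤ C·δ² for all t ≥ 0; and (iv) if moreover g is differentiable, then ‖(deriv g_δ)(t) − (deriv g)(t)‖ ≤ C·δ² + C·δ for all t ≥ 0. -/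
/-- Analytic core of the Kobayashi approximation: interpolating between `g` and `g + h`
by a δ-Kobayashi cutoff `w` (which is `1` on `[0, ε]`) produces `g_δ = g + w • h` which
agrees with `g + h` on `[0, ε]`, agrees with `g` on `[δ, ∞)`, is C⁰-close to `g` of
order `C δ²`, and (if `g` is differentiable) C¹-close of order `C δ² + C δ`. -/
theorem kobayashi_interpolation
    {E : Type*} [NormedAddCommGroup E] [NormedSpace ℝ E]
    (δ ε : ℝ) (hδ : 0 < δ) (hε : 0 < ε) (hεδ : ε < δ) (w : ℝ → ℝ)
    (hw_smooth : ContDiff ℝ (⊤ : ℕ∞) w)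
    (hw_nonneg : ∀ t : ℝ, 0 ≤ w t) (hw_le_one : ∀ t : ℝ, w t ≤ 1)
    (hw_one : ∀ t ∈ Set.Icc (0 : ℝ) ε, w t = 1)
    (hw_zero : ∀ t : ℝ, δ ≤ t → w t = 0)
    (hw_deriv : ∀ t : ℝ, 0 ≤ t → |t * deriv w t| ≤ δ)
    (hw_deriv2 : ∀ t : ℝ, 0 ≤ t → |t * deriv (deriv w) t| ≤ δ)
    (C : ℝ) (hC : 0 ≤ C) (g h : ℝ → E)
    (hh_diff : Differentiable ℝ h)
    (hh : ∀ t : ℝ, 0 ≤ t → ‖h t‖ ≤ C * t ^ 2)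
    (hh' : ∀ t : ℝ, 0 ≤ t → ‖deriv h t‖ ≤ C * t)
    (gδ : ℝ → E) (hgδ : ∀ t : ℝ, gδ t = g t + w t • h t) :
    (∀ t ∈ Set.Icc (0 : ℝ) ε, gδ t = g t + h t) ∧
    (∀ t : ℝ, δ ≤ t → gδ t = g t) ∧
    (∀ t : ℝ, 0 ≤ t → ‖gδ t - g t‖ ≤ C * δ ^ 2) ∧
    (Differentiable ℝ g →
      ∀ t : ℝ, 0 ≤ t → ‖deriv gδ t - deriv g t‖ ≤ C * δ ^ 2 + C * δ) := by
  have hwdiff : Differentiable ℝ w := hw_smooth.differentiable (by simp)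
  have hfun : gδ = fun t => g t + w t • h t := funext hgδ
  subst hfun
  have hw0 : ∀ t : ℝ, δ < t → deriv w t = 0 := by
    intro t ht
    have heq : w =ᶠ[nhds t] (fun _ => (0 : ℝ)) :=
      Filter.eventuallyEq_of_mem (Ioi_mem_nhds ht) (fun x hx => hw_zero x (le_of_lt hx))
    rw [heq.deriv_eq, deriv_const]
  refine ⟨?_, ?_, ?_, ?_⟩
  · intro t ht
    show g t + w t • h t = g t + h t
    rw [hw_one t ht, one_smul]
  · intro t ht
    show g t + w t • h t = g t
    rw [hw_zero t ht, zero_smul, add_zero]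
  · intro t ht
    show ‖g t + w t • h t - g t‖ ≤ C * δ ^ 2
    have heq : g t + w t • h t - g t = w t • h t := by abel
    rw [heq, norm_smul, Real.norm_eq_abs, abs_of_nonneg (hw_nonneg t)]
    rcases le_or_gt t δ with h1 | h1
    · calc w t * ‖h t‖ ≤ 1 * ‖h t‖ := by gcongr; exact hw_le_one t
        _ = ‖h t‖ := one_mul _
        _ ≤ C * t ^ 2 := hh t ht
        _ ≤ C * δ ^ 2 := by gcongr
    · rw [hw_zero t (le_of_lt h1), zero_mul]
      positivity
  · intro hg t ht
    have hD : HasDerivAt (fun t => g t + w t • h t)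
        (deriv g t + (w t • deriv h t + deriv w t • h t)) t :=
      (hg t).hasDerivAt.add (((hwdiff t).hasDerivAt).smul (hh_diff t).hasDerivAt)
    rw [hD.deriv]
    have heq : deriv g t + (w t • deriv h t + deriv w t • h t) - deriv g t
        = w t • deriv h t + deriv w t • h t := by abel
    rw [heq]
    have hA : ‖deriv w t • h t‖ ≤ C * δ ^ 2 := by
      rw [norm_smul, Real.norm_eq_abs]
      rcases le_or_gt t δ with h1 | h1
      · have h3 := hw_deriv t ht
        have h3' : |deriv w t| * t ≤ δ := by
          rw [abs_mul, abs_of_nonneg ht, mul_comm] at h3; exact h3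
        calc |deriv w t| * ‖h t‖ ≤ |deriv w t| * (C * t ^ 2) :=
              mul_le_mul_of_nonneg_left (hh t ht) (abs_nonneg _)
          _ = C * ((|deriv w t| * t) * t) := by ring
          _ ≤ C * (δ * δ) :=
              mul_le_mul_of_nonneg_left (mul_le_mul h3' h1 ht hδ.le) hC
          _ = C * δ ^ 2 := by ring
      · rw [hw0 t h1, abs_zero, zero_mul]
        positivity
    have hB : ‖w t • deriv h t‖ ≤ C * δ := by
      rw [norm_smul, Real.norm_eq_abs, abs_of_nonneg (hw_nonneg t)]
      rcases le_or_gt t δ with h1 | h1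
      · calc w t * ‖deriv h t‖ ≤ 1 * ‖deriv h t‖ := by gcongr; exact hw_le_one t
          _ = ‖deriv h t‖ := one_mul _
          _ ≤ C * t := hh' t ht
          _ ≤ C * δ := by gcongr
      · rw [hw_zero t (le_of_lt h1), zero_mul]
        positivity
    calc ‖w t • deriv h t + deriv w t • h t‖
        ≤ ‖w t • deriv h t‖ + ‖deriv w t • h t‖ := norm_add_le _ _
      _ ≤ C * δ + C * δ ^ 2 := add_le_add hB hA
      _ = C * δ ^ 2 + C * δ := by ring
end
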